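/- arXiv:2408.12811 — 2 statements merged into one kernel-verified Lean document; each statement's English description precedes it below -/
import Mathlib

section
/- Let A > 0, B ≤ 0 with A + B > 0 (so that 1 + B·δ'(c) > 0), and δ the inverse of f(x) = Ax + x/(1+x). Define γ̃(c) = δ(c)/(1 + B·δ'(c)). Then for any c₁,…,c_K ≥ 0 with mean c̄ = (1/K)∑c_k, ∑_{k=1}^K γ̃(c_k) ≤ γ̃(K·c̄), i.e., concentrating the total resource in one cluster maximizes the sum. -/
/-!
`δ` inverts `f x = A x + x / (1 + x)`, which is strictly increasing and subadditive on `[0, ∞)`;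
hence `δ` is monotone and superadditive there, so `∑ δ (c k) ≤ δ (∑ c k)`. The denominator
`1 + B / (A + (1 + x)⁻²)` is positive and, as `B ≤ 0`, decreasing in `x`, so replacing each
`δ (c k)` in it by the larger `δ (∑ c k)` only increases every summand.
-/

open Set

section RightInverse

lemma StrictMonoOn.monotoneOn_of_rightInvOn {α β : Type*} [LinearOrder α] [Preorder β]
    {f : α → β} {g : β → α} {s : Set α} {t : Set β} (hf : StrictMonoOn f s)
    (hmaps : MapsTo g t s) (hinv : RightInvOn g f t) : MonotoneOn g t := by
  intro u hu v hv huv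
  rw [← hf.le_iff_le (hmaps hu) (hmaps hv), hinv hu, hinv hv]
  exact huv

variable {f g : ℝ → ℝ}

lemma superadditive_of_rightInvOn_of_subadditive (hf : StrictMonoOn f (Ici 0))
    (hsub : ∀ x ∈ Ici (0 : ℝ), ∀ y ∈ Ici (0 : ℝ), f (x + y) ≤ f x + f y)
    (hmaps : MapsTo g (Ici 0) (Ici 0)) (hinv : RightInvOn g f (Ici 0))
    {u v : ℝ} (hu : 0 ≤ u) (hv : 0 ≤ v) : g u + g v ≤ g (u + v) := by
  have huv : u + v ∈ Ici (0 : ℝ) := add_nonneg hu hv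
  have hgu : g u ∈ Ici (0 : ℝ) := hmaps hu
  have hgv : g v ∈ Ici (0 : ℝ) := hmaps hv
  rw [← hf.le_iff_le (mem_Ici.2 (add_nonneg hgu hgv)) (hmaps huv), hinv huv]
  calc f (g u + g v) ≤ f (g u) + f (g v) := hsub _ hgu _ hgv
    _ = u + v := by rw [hinv (mem_Ici.2 hu), hinv (mem_Ici.2 hv)]

lemma sum_le_of_superadditive {ι : Type*} (hg0 : 0 ≤ g 0)
    (hg : ∀ u v : ℝ, 0 ≤ u → 0 ≤ v → g u + g v ≤ g (u + v))
    (s : Finset ι) {c : ι → ℝ} (hc : ∀ i ∈ s, 0 ≤ c i) :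
    ∑ i ∈ s, g (c i) ≤ g (∑ i ∈ s, c i) := by
  have h := Finset.le_sum_of_subadditive_on_pred (fun x => -g x) (fun x : ℝ => 0 ≤ x)
    (by simpa using hg0) (fun u v hu hv => by linarith [hg u v hu hv])
    (fun _ _ => add_nonneg) c hc
  simpa only [Finset.sum_neg_distrib, neg_le_neg_iff] using h

end RightInverse

lemma div_one_add_add_le {x y : ℝ} (hx : 0 ≤ x) (hy : 0 ≤ y) :
    (x + y) / (1 + (x + y)) ≤ x / (1 + x) + y / (1 + y) := by
  rw [div_add_div _ _ (by positivity) (by positivity), div_le_div_iff₀ (by positivity)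
    (by positivity)]
  nlinarith [mul_nonneg hx hy, mul_nonneg (mul_nonneg hx hy) (add_nonneg hx hy)]

section Model

variable {A : ℝ}

lemma strictMonoOn_mul_add_div_one_add (hA : 0 < A) :
    StrictMonoOn (fun x : ℝ => A * x + x / (1 + x)) (Ici 0) := by
  intro x hx y hy hxy
  have hx' : 0 ≤ x := hx
  have hfrac : x / (1 + x) ≤ y / (1 + y) := by
    rw [div_le_div_iff₀ (by positivity) (by linarith)]
    nlinarith
  dsimp only
  nlinarith

lemma mul_add_div_one_add_subadditive (x : ℝ) (hx : x ∈ Ici 0) (y : ℝ) (hy : y ∈ Ici 0) :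
    A * (x + y) + (x + y) / (1 + (x + y)) ≤ (A * x + x / (1 + x)) + (A * y + y / (1 + y)) := by
  linarith [div_one_add_add_le (mem_Ici.1 hx) (mem_Ici.1 hy)]

variable {B : ℝ}

/-- The denominator `1 + B δ'(c)` written in terms of `x = δ c`. -/
noncomputable def denom (A B x : ℝ) : ℝ := 1 + B * (1 / (A + 1 / (1 + x) ^ 2))

lemma denom_pos (hA : 0 < A) (hAB : 0 < A + B) (x : ℝ) : 0 < denom A B x := by
  have hq : 0 ≤ 1 / (1 + x) ^ 2 := by positivity
  have hE : 0 < A + 1 / (1 + x) ^ 2 := by positivity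
  have : denom A B x = (A + 1 / (1 + x) ^ 2 + B) / (A + 1 / (1 + x) ^ 2) := by
    unfold denom
    field_simp
  rw [this]
  exact div_pos (by linarith) hE

lemma denom_antitoneOn (hA : 0 < A) (hB : B ≤ 0) : AntitoneOn (denom A B) (Ici 0) := by
  intro x hx y hy hxy
  have hx' : 0 ≤ x := hx
  have hsq : 1 / (1 + y) ^ 2 ≤ 1 / (1 + x) ^ 2 :=
    one_div_le_one_div_of_le (by positivity) (by gcongr)
  have hinv : 1 / (A + 1 / (1 + x) ^ 2) ≤ 1 / (A + 1 / (1 + y) ^ 2) :=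
    one_div_le_one_div_of_le (by positivity) (by linarith)
  unfold denom
  linarith [mul_le_mul_of_nonpos_left hinv hB]

end Model

/-- With `A > 0`, `B ≤ 0`, `A + B > 0`, `δ = f⁻¹` for `f(x) = Ax + x/(1+x)`, and
`γ̃(c) = δ(c)/(1 + B·δ'(c))` where `δ'(c) = 1/(A + 1/(1+δ(c))²)`: for any
nonnegative `c₁,…,c_K` with mean `c̄`, `∑ γ̃(c_k) ≤ γ̃(K·c̄) = γ̃(∑ c_k)`. -/
theorem concentration_maximizes_sum (A B : ℝ) (hA : 0 < A) (hB : B ≤ 0)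
    (hAB : 0 < A + B) (δ : ℝ → ℝ)
    (hδ : ∀ c : ℝ, 0 ≤ c → 0 ≤ δ c ∧ A * δ c + δ c / (1 + δ c) = c)
    (K : ℕ) (c : Fin K → ℝ) (hc : ∀ k, 0 ≤ c k) :
    ∑ k, δ (c k) / (1 + B * (1 / (A + 1 / (1 + δ (c k)) ^ 2)))
      ≤ δ (∑ k, c k) / (1 + B * (1 / (A + 1 / (1 + δ (∑ k, c k)) ^ 2))) := by
  have hmaps : MapsTo δ (Ici 0) (Ici 0) := fun t ht => (hδ t ht).1
  have hinv : RightInvOn δ (fun x => A * x + x / (1 + x)) (Ici 0) := fun t ht => (hδ t ht).2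
  have hf := strictMonoOn_mul_add_div_one_add hA
  have hδmono : MonotoneOn δ (Ici 0) := hf.monotoneOn_of_rightInvOn hmaps hinv
  have hsum : ∑ k, δ (c k) ≤ δ (∑ k, c k) :=
    sum_le_of_superadditive (hmaps (mem_Ici.2 le_rfl))
      (fun u v => superadditive_of_rightInvOn_of_subadditive hf
        mul_add_div_one_add_subadditive hmaps hinv)
      Finset.univ fun k _ => hc k
  have hS : (0 : ℝ) ≤ ∑ k, c k := Finset.sum_nonneg fun k _ => hc k
  change ∑ k, δ (c k) / denom A B (δ (c k)) ≤ δ (∑ k, c k) / denom A B (δ (∑ k, c k))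
  calc ∑ k, δ (c k) / denom A B (δ (c k))
      ≤ ∑ k, δ (c k) / denom A B (δ (∑ k, c k)) := by
        refine Finset.sum_le_sum fun k _ => div_le_div_of_nonneg_left (hmaps (hc k))
          (denom_pos hA hAB _) (denom_antitoneOn hA hB (hmaps (hc k)) (hmaps hS) ?_)
        exact hδmono (hc k) hS (Finset.single_le_sum (fun i _ => hc i) (Finset.mem_univ k))
    _ = (∑ k, δ (c k)) / denom A B (δ (∑ k, c k)) := (Finset.sum_div _ _ _).symm
    _ ≤ δ (∑ k, c k) / denom A B (δ (∑ k, c k)) :=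
        div_le_div_of_nonneg_right hsum (denom_pos hA hAB _).le
end

section
/- Let A > 0, B ≤ 0 with A + B > 0, c > 0, and δ̄_K = f⁻¹(c/K) where f(x) = Ax + x/(1+x). Then for every K ≥ 1, K·δ̄_K/(1 + B/(A + (1+δ̄_K)^{-2})) ≥ c/(A + B + 1), and the right-hand side is the limit as K → ∞. -/
open Filter

private lemma aux_eq (A B c k δ : ℝ) (hA : 0 < A) (hAB : 0 < A + B)
    (hk : 0 < k) (hδ : 0 < δ) (heq : A * δ + δ / (1 + δ) = c / k) :
    k * δ / (1 + B / (A + (1 + δ)⁻¹ ^ 2)) =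
      c * (A + (1 + δ)⁻¹ ^ 2) / ((A + (1 + δ)⁻¹) * (A + B + (1 + δ)⁻¹ ^ 2)) := by
  have h1 : (0:ℝ) < 1 + δ := by linarith
  have hs : 0 < (1 + δ)⁻¹ := inv_pos.mpr h1
  have hAs : 0 < A + (1 + δ)⁻¹ := by positivity
  have hAt : 0 < A + (1 + δ)⁻¹ ^ 2 := by positivity
  have hABt : 0 < A + B + (1 + δ)⁻¹ ^ 2 := by nlinarith [sq_nonneg ((1 + δ)⁻¹)]
  have heq2 : δ * (A + (1 + δ)⁻¹) = c / k := by
    rw [← heq, div_eq_mul_inv]; ring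
  have hKδ : k * δ = c / (A + (1 + δ)⁻¹) := by
    rw [eq_div_iff hAs.ne']
    have h := congrArg (· * k) heq2
    simp only [div_mul_cancel₀ _ hk.ne'] at h
    nlinarith [h]
  generalize hsg : (1 + δ)⁻¹ = s at *
  have hden : 1 + B / (A + s ^ 2) = (A + B + s ^ 2) / (A + s ^ 2) := by
    field_simp [hAt.ne']
    ring
  rw [hKδ, hden]
  rw [div_div_div_eq]

private lemma aux_ineq (A B c s : ℝ) (hA : 0 < A) (hB : B ≤ 0) (hAB : 0 < A + B)
    (hc : 0 < c) (hs : 0 < s) (hs1 : s ≤ 1) :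
    c / (A + B + 1) ≤ c * (A + s ^ 2) / ((A + s) * (A + B + s ^ 2)) := by
  have hABt : 0 < A + B + s ^ 2 := by nlinarith [sq_nonneg s]
  have hAs : 0 < A + s := by linarith
  have hAB1 : 0 < A + B + 1 := by linarith
  rw [div_le_div_iff₀ hAB1 (by positivity)]
  nlinarith [mul_nonneg (mul_nonneg (sub_nonneg.mpr hs1)
    (show (0:ℝ) ≤ A + s ^ 2 - B * s by nlinarith)) hc.le]

/-- Let `A > 0`, `B ≤ 0`, `A + B > 0`, `c > 0` and for each `K ≥ 1` let
`δ̄_K > 0` solve `A·x + x/(1+x) = c/K`. Then for every `K ≥ 1`,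
`K·δ̄_K/(1 + B/(A + (1+δ̄_K)⁻²)) ≥ c/(A+B+1)`, and the right-hand side is the
limit as `K → ∞`. -/
theorem sinr_lower_bound_and_limit (A B c : ℝ) (hA : 0 < A) (hB : B ≤ 0)
    (hAB : 0 < A + B) (hc : 0 < c) (d : ℕ → ℝ)
    (hd : ∀ K : ℕ, 1 ≤ K → 0 < d K ∧ A * d K + d K / (1 + d K) = c / K) :
    (∀ K : ℕ, 1 ≤ K →
      c / (A + B + 1) ≤ (K : ℝ) * d K / (1 + B / (A + (1 + d K)⁻¹ ^ 2))) ∧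
    Filter.Tendsto (fun K : ℕ => (K : ℝ) * d K / (1 + B / (A + (1 + d K)⁻¹ ^ 2)))
      Filter.atTop (nhds (c / (A + B + 1))) := by
  have key : ∀ K : ℕ, 1 ≤ K →
      (K : ℝ) * d K / (1 + B / (A + (1 + d K)⁻¹ ^ 2)) =
      c * (A + (1 + d K)⁻¹ ^ 2) / ((A + (1 + d K)⁻¹) * (A + B + (1 + d K)⁻¹ ^ 2)) := by
    intro K hK
    obtain ⟨hpos, heq⟩ := hd K hK
    exact aux_eq A B c K (d K) hA hAB (by exact_mod_cast hK) hpos heq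
  have ineq : ∀ K : ℕ, 1 ≤ K →
      c / (A + B + 1) ≤ (K : ℝ) * d K / (1 + B / (A + (1 + d K)⁻¹ ^ 2)) := by
    intro K hK
    obtain ⟨hpos, _⟩ := hd K hK
    rw [key K hK]
    have h1 : (0:ℝ) < 1 + d K := by linarith
    exact aux_ineq A B c (1 + d K)⁻¹ hA hB hAB hc (inv_pos.mpr h1)
      (inv_le_one_of_one_le₀ (by linarith))
  refine ⟨ineq, ?_⟩
  set g : ℝ → ℝ := fun x =>
    c * (A + (1 + x)⁻¹ ^ 2) / ((A + (1 + x)⁻¹) * (A + B + (1 + x)⁻¹ ^ 2)) with hg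
  have hd0 : Tendsto d atTop (nhds 0) := by
    have hub : ∀ᶠ K : ℕ in atTop, d K ≤ (c / A) / K := by
      filter_upwards [eventually_ge_atTop 1] with K hK
      obtain ⟨hpos, heq⟩ := hd K hK
      have h1 : (0:ℝ) < 1 + d K := by linarith
      have hKpos : (0:ℝ) < (K:ℝ) := by exact_mod_cast hK
      have hfrac : 0 ≤ d K / (1 + d K) := by positivity
      have h2 : A * d K ≤ c / K := by linarith
      calc d K ≤ c / (K : ℝ) / A := by
            rw [le_div_iff₀ hA, mul_comm]; exact h2
        _ = (c / A) / K := by rw [div_right_comm]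
    have hlb : ∀ᶠ K : ℕ in atTop, 0 ≤ d K := by
      filter_upwards [eventually_ge_atTop 1] with K hK
      exact (hd K hK).1.le
    exact squeeze_zero' hlb hub (tendsto_const_div_atTop_nhds_zero_nat (c / A))
  have hgcont : ContinuousAt g 0 := by
    have hnum : ContinuousAt (fun x : ℝ => c * (A + (1 + x)⁻¹ ^ 2)) 0 := by
      fun_prop (disch := norm_num)
    have hden : ContinuousAt
        (fun x : ℝ => (A + (1 + x)⁻¹) * (A + B + (1 + x)⁻¹ ^ 2)) 0 := by
      fun_prop (disch := norm_num)
    have hdne : (A + ((1:ℝ) + 0)⁻¹) * (A + B + ((1:ℝ) + 0)⁻¹ ^ 2) ≠ 0 := by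
      norm_num
      constructor <;> intro h <;> [linarith; linarith]
    exact hnum.div hden hdne
  have hg0 : g 0 = c / (A + B + 1) := by
    have h1 : ((1:ℝ) + 0)⁻¹ = 1 := by norm_num
    simp only [hg, h1, one_pow]
    rw [div_eq_div_iff (mul_pos (by linarith) (by linarith)).ne' (by linarith : A + B + 1 ≠ 0)]
    ring
  have hlim := hgcont.tendsto.comp hd0
  rw [hg0] at hlim
  apply hlim.congr'
  filter_upwards [eventually_ge_atTop 1] with K hK
  exact (key K hK).symm
end
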